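/- Let (V, b) be a finite-dimensional symplectic vector space over an algebraically closed field K of characteristic 2, with dim V = 2ℓ, ℓ ≥ 1, and let φ : S²(V) → K be the linear map determined by φ(xy) = b(x, y). Then ker φ is isomorphic, as an Sp(V)-module, to the dual of the quotient Lie algebra sp(V)/Z(sp(V)): there exists a K-linear bijection Θ : ker φ → (sp(V)/Z(sp(V)))* such that Θ(g̃ s)(X + Z(sp(V))) = Θ(s)(g⁻¹Xg + Z(sp(V))) for all g ∈ Sp(V), all s ∈ ker φ and all X ∈ sp(V). -/

import Mathlib

/-!
For alternating `b`, an endomorphism `X` lies in `sp(V)` exactly when `(x, y) ↦ b(Xx, y)` is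
symmetric, so by nondegeneracy `X ↦ (xy ↦ b(Xx, y))` is an isomorphism `sp(V) ≅ S²(V)*`.
Dualizing gives `S²(V) ≅ sp(V)*`, under which `φ` becomes evaluation at the identity; hence
`ker φ` is the annihilator of `Z(sp(V)) = K·1`, that is `(sp(V)/Z(sp(V)))*`. Equivariance holds
because `b(X(gx), gy) = b(g(Yx), gy) = b(Yx, y)` whenever `Xg = gY` and `g ∈ Sp(V)`.
-/

open scoped TensorProduct

/-- The symmetric square `S²(V)`: the quotient of `V ⊗ V` by the span of all
`x ⊗ y - y ⊗ x`. -/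
noncomputable abbrev SymSq (K V : Type*) [Field K] [AddCommGroup V] [Module K V] : Type _ :=
  TensorProduct K V V ⧸
    Submodule.span K {z : TensorProduct K V V | ∃ x y : V, z = x ⊗ₜ[K] y - y ⊗ₜ[K] x}

/-- The product `xy` in the symmetric square, i.e. the image of `x ⊗ y`. -/
noncomputable def SymSq.mul {K V : Type*} [Field K] [AddCommGroup V] [Module K V]
    (x y : V) : SymSq K V :=
  Submodule.Quotient.mk (x ⊗ₜ[K] y)

/-- The symplectic Lie algebra `sp(V)` of a bilinear form `b`:
all `X` with `b(Xv, w) + b(v, Xw) = 0`, as a submodule of `End(V)`. -/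
def spSub (K V : Type*) [Field K] [AddCommGroup V] [Module K V]
    (b : V →ₗ[K] V →ₗ[K] K) : Submodule K (Module.End K V) where
  carrier := {X | ∀ v w : V, b (X v) w + b v (X w) = 0}
  add_mem' := by
    intro X Y hX hY v w
    have h1 := hX v w
    have h2 := hY v w
    simp only [LinearMap.add_apply, map_add] at *
    linear_combination h1 + h2
  zero_mem' := by
    intro v w
    simp
  smul_mem' := by
    intro c X hX v w
    have h := hX v w
    simp only [LinearMap.smul_apply, map_smul, smul_eq_mul] at *
    linear_combination c * h


namespace SymSq

variable {K V W : Type*} [Field K] [AddCommGroup V] [Module K V] [AddCommGroup W] [Module K W]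

noncomputable def mulₗ : V →ₗ[K] V →ₗ[K] SymSq K V :=
  (TensorProduct.mk K V V).compr₂ (Submodule.mkQ _)

lemma mul_comm (x y : V) : SymSq.mul (K := K) x y = SymSq.mul y x :=
  (Submodule.Quotient.eq _).2 (Submodule.subset_span ⟨x, y, rfl⟩)

lemma hom_ext {f g : SymSq K V →ₗ[K] W}
    (H : ∀ x y : V, f (SymSq.mul x y) = g (SymSq.mul x y)) : f = g :=
  Submodule.linearMap_qext _ (TensorProduct.ext' H)

noncomputable def lift (β : V →ₗ[K] V →ₗ[K] W) (hβ : ∀ v w, β v w = β w v) :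
    SymSq K V →ₗ[K] W :=
  Submodule.liftQ _ (TensorProduct.lift β) <| (Submodule.span_le).2 <| by
    rintro _ ⟨x, y, rfl⟩
    simp [hβ x y]

@[simp] lemma lift_mul (β : V →ₗ[K] V →ₗ[K] W) (hβ : ∀ v w, β v w = β w v) (x y : V) :
    lift β hβ (SymSq.mul x y) = β x y :=
  rfl

end SymSq

section Symplectic

variable {K V : Type*} [Field K] [AddCommGroup V] [Module K V] {b : V →ₗ[K] V →ₗ[K] K}

lemma mem_spSub_iff (hb : b.IsAlt) {X : Module.End K V} :
    X ∈ spSub K V b ↔ ∀ v w, b (X v) w = b (X w) v := by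
  refine forall₂_congr fun v w => ?_
  rw [← hb.neg (X w) v, add_neg_eq_zero]

noncomputable def spToDual (hb : b.IsAlt) : spSub K V b →ₗ[K] Module.Dual K (SymSq K V) where
  toFun X := SymSq.lift (b ∘ₗ X.1) ((mem_spSub_iff hb).1 X.2)
  map_add' X Y := SymSq.hom_ext fun x y => by simp
  map_smul' c X := SymSq.hom_ext fun x y => by simp

@[simp] lemma spToDual_mul (hb : b.IsAlt) (X : spSub K V b) (x y : V) :
    spToDual hb X (SymSq.mul x y) = b (X.1 x) y :=
  rfl

lemma spToDual_bijective [FiniteDimensional K V] (hb : b.IsAlt) (hnd : b.SeparatingLeft) :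
    Function.Bijective (spToDual hb) := by
  refine ⟨fun X Y hXY => Subtype.ext <| LinearMap.ext fun v => ?_, fun f => ?_⟩
  · refine sub_eq_zero.1 <| hnd _ fun w => ?_
    simpa [sub_eq_zero] using LinearMap.congr_fun hXY (SymSq.mul v w)
  · have hb' : LinearMap.BilinForm.Nondegenerate b :=
      hb.isRefl.nondegenerate_iff_separatingLeft.2 hnd
    let X : Module.End K V :=
      (LinearMap.BilinForm.toDual b hb').symm.toLinearMap ∘ₗ SymSq.mulₗ.compr₂ f
    have hX : ∀ v w, b (X v) w = f (SymSq.mul v w) := fun v w =>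
      LinearMap.BilinForm.apply_toDual_symm_apply (hB := hb') _ w
    refine ⟨⟨X, (mem_spSub_iff hb).2 fun v w => ?_⟩, SymSq.hom_ext hX⟩
    rw [hX, hX, SymSq.mul_comm]

lemma spToDual_comp_of_comp_eq (hb : b.IsAlt) {g : V →ₗ[K] V}
    (hg : ∀ v w, b (g v) (g w) = b v w) {gt : Module.End K (SymSq K V)}
    (hgt : ∀ x y, gt (SymSq.mul x y) = SymSq.mul (g x) (g y)) {X Y : spSub K V b}
    (hXY : X.1 ∘ₗ g = g ∘ₗ Y.1) :
    spToDual hb X ∘ₗ gt = spToDual hb Y := by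
  refine SymSq.hom_ext fun v w => ?_
  rw [LinearMap.comp_apply, hgt, spToDual_mul, spToDual_mul, ← hg (Y.1 v) w,
    ← LinearMap.comp_apply g, ← hXY, LinearMap.comp_apply]

end Symplectic

lemma exists_linearEquiv_ker_dual_quotient_span {R M N : Type*} [CommRing R]
    [AddCommGroup M] [Module R M] [AddCommGroup N] [Module R N]
    (Ψ : M ≃ₗ[R] Module.Dual R N) (c : N) (φ : Module.Dual R M) (hφ : ∀ m, Ψ m c = φ m) :
    ∃ Θ : LinearMap.ker φ ≃ₗ[R] Module.Dual R (N ⧸ Submodule.span R {c}),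
      ∀ s n, Θ s (Submodule.Quotient.mk n) = Ψ s n := by
  have hker : (LinearMap.ker φ).map (Ψ : M →ₗ[R] Module.Dual R N) =
      (Submodule.span R {c}).dualAnnihilator := by
    ext f
    rw [Submodule.mem_map_equiv, LinearMap.mem_ker, ← hφ, LinearEquiv.apply_symm_apply,
      Submodule.mem_dualAnnihilator]
    refine ⟨fun hf w hw => ?_, fun hf => hf c (Submodule.mem_span_singleton_self c)⟩
    obtain ⟨a, rfl⟩ := Submodule.mem_span_singleton.1 hw
    rw [map_smul, hf, smul_zero]
  exact ⟨(Ψ.submoduleMap _).trans <| (LinearEquiv.ofEq _ _ hker).trans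
    (Submodule.dualQuotEquivDualAnnihilator _).symm, fun s n => rfl⟩

/-- The compatibility `Θ(g̃ s)(X + Z) = Θ(s)(g⁻¹Xg + Z)` is encoded by quantifying over
`s' = g̃ s` and over `Y = g⁻¹Xg`, the latter as `X ∘ g = g ∘ Y`. -/
theorem stmt6_general (K : Type*) [Field K]
    (V : Type*) [AddCommGroup V] [Module K V] [FiniteDimensional K V]
    (b : V →ₗ[K] V →ₗ[K] K)
    (halt : ∀ v : V, b v v = 0)
    (hnd : ∀ v : V, (∀ w : V, b v w = 0) → v = 0)
    (h1 : (1 : Module.End K V) ∈ spSub K V b)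
    (φ : SymSq K V →ₗ[K] K)
    (hφ : ∀ x y : V, φ (SymSq.mul x y) = b x y) :
    ∃ Θ : ↥(LinearMap.ker φ) ≃ₗ[K]
        Module.Dual K
          (↥(spSub K V b) ⧸ Submodule.span K {(⟨1, h1⟩ : ↥(spSub K V b))}),
      ∀ g : V ≃ₗ[K] V, (∀ v w : V, b (g v) (g w) = b v w) →
        ∀ gt : Module.End K (SymSq K V),
          (∀ x y : V, gt (SymSq.mul x y) = SymSq.mul (g x) (g y)) →
        ∀ s s' : ↥(LinearMap.ker φ), (↑s' : SymSq K V) = gt ↑s →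
        ∀ X Y : ↥(spSub K V b),
          (↑X : Module.End K V) ∘ₗ (↑g : V →ₗ[K] V)
            = (↑g : V →ₗ[K] V) ∘ₗ (↑Y : Module.End K V) →
          Θ s' (Submodule.Quotient.mk X) = Θ s (Submodule.Quotient.mk Y) := by
  let E := LinearEquiv.ofBijective (spToDual halt) (spToDual_bijective halt hnd)
  let Ψ : SymSq K V ≃ₗ[K] Module.Dual K (spSub K V b) :=
    (Module.evalEquiv K (SymSq K V)).trans E.dualMap
  have hΨ : ∀ s X, Ψ s X = spToDual halt X s := fun _ _ => rfl
  have hφ_one : spToDual halt ⟨1, h1⟩ = φ := SymSq.hom_ext fun x y => (hφ x y).symm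
  obtain ⟨Θ, hΘ⟩ := exists_linearEquiv_ker_dual_quotient_span Ψ ⟨1, h1⟩ φ
    fun s => by rw [hΨ, hφ_one]
  refine ⟨Θ, fun g hg gt hgt s s' hs' X Y hXY => ?_⟩
  rw [hΘ, hΘ, hΨ, hΨ, hs', ← spToDual_comp_of_comp_eq halt hg hgt hXY, LinearMap.comp_apply]

/-- `ker φ ≅ (sp(V)/Z(sp(V)))*` as `Sp(V)`-modules, where `φ : S²(V) → K` is determined by
`φ(xy) = b(x,y)` and `Z(sp(V))` is the span of the identity. The compatibility
`Θ(g̃ s)(X + Z) = Θ(s)(g⁻¹Xg + Z)` is encoded by quantifying over `s' = g̃ s` and over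
`Y = g⁻¹Xg`, the latter as `X ∘ g = g ∘ Y`. -/
theorem stmt6 (K : Type*) [Field K] [IsAlgClosed K] [CharP K 2]
    (V : Type*) [AddCommGroup V] [Module K V] [FiniteDimensional K V]
    (ℓ : ℕ) (hl : 1 ≤ ℓ) (hdim : Module.finrank K V = 2 * ℓ)
    (b : V →ₗ[K] V →ₗ[K] K)
    (halt : ∀ v : V, b v v = 0)
    (hnd : ∀ v : V, (∀ w : V, b v w = 0) → v = 0)
    (h1 : (1 : Module.End K V) ∈ spSub K V b)
    (φ : SymSq K V →ₗ[K] K)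
    (hφ : ∀ x y : V, φ (SymSq.mul x y) = b x y) :
    ∃ Θ : ↥(LinearMap.ker φ) ≃ₗ[K]
        Module.Dual K
          (↥(spSub K V b) ⧸ Submodule.span K {(⟨1, h1⟩ : ↥(spSub K V b))}),
      ∀ g : V ≃ₗ[K] V, (∀ v w : V, b (g v) (g w) = b v w) →
        ∀ gt : Module.End K (SymSq K V),
          (∀ x y : V, gt (SymSq.mul x y) = SymSq.mul (g x) (g y)) →
        ∀ s s' : ↥(LinearMap.ker φ), (↑s' : SymSq K V) = gt ↑s →
        ∀ X Y : ↥(spSub K V b),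
          (↑X : Module.End K V) ∘ₗ (↑g : V →ₗ[K] V)
            = (↑g : V →ₗ[K] V) ∘ₗ (↑Y : Module.End K V) →
          Θ s' (Submodule.Quotient.mk X) = Θ s (Submodule.Quotient.mk Y) :=
  stmt6_general K V b halt hnd h1 φ hφ
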